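/- Let $T$ be a bounded positive linear operator on $L^\infty(\mu)$ such that for every $f \in L^\infty$ with $f \ge 0$ a.e. and $f \neq 0$ there exists $n \ge 1$ with $\mathrm{ess}\inf T^n f > 0$, $T^n$ is compact for some $n$, and $r(T) > 0$. Then there exists $\bar f \in L^\infty$ with $\mathrm{ess}\inf \bar f > 0$ such that $T \bar f = r(T)\bar f$, and $\bar f$ is the unique (up to positive scalar multiples) eigenfunction of $T$ in $L^\infty$ that is non-negative a.e. -/

import Mathlib

/-!
The Perron–Frobenius argument works in any normed lattice `E` with an order unit `e` normalised by
`f ≤ ‖f‖ • e` (for `L^∞` take `e = 1`). For a compact power `S = Tᴺ`, the Collatz–Wielandt value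
`λ = sup {l | ∃ u ≥ 0, ‖u‖ = 1, l • u ≤ S u}` is attained by a positive eigenvector of `S`;
summing its `T`-orbit with weights `r^(N-1-i)`, `r = λ^(1/N)`, gives an eigenvector `f̄` of `T`
lying above a multiple of `e`. Squeezed between multiples of `e`, `f̄` gives `‖Tᵏ‖ = O(rᵏ)`, so
`r` is the spectral radius. Every positive eigenvector is squeezed between multiples of `f̄`,
which forces its eigenvalue to be `r`, and then it is a multiple of `f̄`.
-/

open MeasureTheory Filter Finset
open scoped ENNReal

theorem le_of_forall_pow_le_mul_pow {x r C : ℝ} (hr : 0 < r) (h : ∀ n : ℕ, x ^ n ≤ C * r ^ n) :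
    x ≤ r := by
  by_contra! hrx
  obtain ⟨n, hn⟩ := pow_unbounded_of_one_lt C ((one_lt_div hr).mpr hrx)
  rw [div_pow, lt_div_iff₀ (pow_pos hr n)] at hn
  exact (h n).not_gt hn

theorem spectralRadius_le_of_norm_pow_le {𝕜 A : Type*} [NormedField 𝕜] [NormedRing A]
    [NormedAlgebra 𝕜 A] [CompleteSpace A] [NormOneClass A] {a : A} {C r : ℝ} (hr : 0 < r)
    (h : ∀ n : ℕ, ‖a ^ n‖ ≤ C * r ^ n) : spectralRadius 𝕜 a ≤ ENNReal.ofReal r := by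
  refine iSup₂_le fun k hk => ?_
  rw [← enorm_eq_nnnorm, ← ofReal_norm]
  refine ENNReal.ofReal_le_ofReal (le_of_forall_pow_le_mul_pow (C := C) hr fun n => ?_)
  calc ‖k‖ ^ n = ‖k ^ n‖ := (norm_pow k n).symm
    _ ≤ ‖a ^ n‖ := spectrum.norm_le_norm_of_mem (spectrum.pow_mem_pow a n hk)
    _ ≤ C * r ^ n := h n

namespace ContinuousLinearMap

theorem pow_apply_of_apply_eq_smul {R F : Type*} [CommSemiring R] [TopologicalSpace F]
    [AddCommMonoid F] [Module R F] {T : F →L[R] F} {b : R} {g : F} (h : T g = b • g) (n : ℕ) :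
    (T ^ n) g = b ^ n • g := by
  induction n with
  | zero => simp
  | succ n ih => rw [pow_succ', mul_apply_eq_comp, ih, map_smul, h, smul_smul, pow_succ]

-- Telescoping: `(T - r) * ∑ i < N, Tⁱ r^(N-1-i) = Tᴺ - rᴺ`.
theorem apply_sum_pow_smul_eq {𝕜 F : Type*} [NontriviallyNormedField 𝕜] [NormedAddCommGroup F]
    [NormedSpace 𝕜 F] (T : F →L[𝕜] F) {v : F} {r : 𝕜} {N : ℕ} (hv : (T ^ N) v = r ^ N • v) :
    T (∑ i ∈ range N, r ^ (N - 1 - i) • (T ^ i) v) =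
      r • ∑ i ∈ range N, r ^ (N - 1 - i) • (T ^ i) v := by
  have key := congr($(((Commute.one_right T).smul_right r).mul_geom_sum₂ N) v)
  simp only [smul_pow, one_pow, mul_smul_comm, mul_one, sub_apply, smul_apply, one_apply_eq_self,
    mul_apply_eq_comp, _root_.sum_apply, map_sum, map_smul, hv, sub_self] at key
  rw [← sub_eq_zero, ← key, map_sum, smul_sum, ← sum_sub_distrib]
  simp only [map_smul, smul_sub, smul_comm r]

theorem monotone_pow {R M : Type*} [Semiring R] [TopologicalSpace M] [AddCommMonoid M]
    [Module R M] [Preorder M] {T : M →L[R] M} (hT : Monotone T) (n : ℕ) : Monotone (T ^ n) := by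
  rw [FunLike.coe_pow_eq_iterate]
  exact hT.iterate n

end ContinuousLinearMap

section OrderUnit

variable {E : Type*} [NormedAddCommGroup E] [NormedSpace ℝ E] [Lattice E] {e : E}

theorem abs_le_norm_smul (he : ∀ f : E, f ≤ ‖f‖ • e) (f : E) : |f| ≤ ‖f‖ • e :=
  abs_le'.mpr ⟨he f, by simpa using he (-f)⟩

theorem le_smul_of_smul_le [PosSMulMono ℝ E] (he : ∀ f : E, f ≤ ‖f‖ • e) {α : ℝ} (hα : 0 < α)
    {f : E} (hf : α • e ≤ f) (g : E) : g ≤ (‖g‖ / α) • f :=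
  calc g ≤ ‖g‖ • e := he g
    _ = (‖g‖ / α) • α • e := by rw [smul_smul, div_mul_cancel₀ _ hα.ne']
    _ ≤ (‖g‖ / α) • f := smul_le_smul_of_nonneg_left hf (by positivity)

theorem pos_of_smul_le [PosSMulMono ℝ E] (he : 0 < e) {α : ℝ} (hα : 0 < α) {f : E}
    (hf : α • e ≤ f) : 0 < f :=
  lt_of_lt_of_le (lt_of_le_of_ne (smul_nonneg hα.le he.le)
    (smul_ne_zero hα.ne' he.ne').symm) hf

theorem div_norm_smul_le [PosSMulMono ℝ E] (he : ∀ f : E, f ≤ ‖f‖ • e) {δ : ℝ} (hδ : 0 ≤ δ)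
    {w : E} (hw : w ≠ 0) : (δ / ‖w‖) • w ≤ δ • e := by
  simpa [smul_smul, div_mul_cancel₀ _ (norm_ne_zero_iff.mpr hw)] using
    smul_le_smul_of_nonneg_left (he w) (div_nonneg hδ (norm_nonneg w))

variable [IsOrderedAddMonoid E] [PosSMulMono ℝ E]

theorem pos_of_forall_le_norm_smul [Nontrivial E] (he : ∀ f : E, f ≤ ‖f‖ • e) : 0 < e := by
  obtain ⟨f, hf⟩ := exists_ne (0 : E)
  have hnorm : 0 < ‖f‖ := norm_pos_iff.mpr hf
  have he0 : 0 ≤ e := by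
    have h := smul_le_smul_of_nonneg_left ((abs_nonneg f).trans (abs_le_norm_smul he f))
      (inv_nonneg.mpr hnorm.le)
    rwa [smul_smul, inv_mul_cancel₀ hnorm.ne', one_smul, smul_zero] at h
  refine he0.lt_of_ne fun h => hf (le_antisymm ?_ ?_)
  · simpa [← h] using he f
  · simpa [← h] using he (-f)

theorem le_of_smul_le_smul_of_pos (he : 0 < e) {c d : ℝ} (h : c • e ≤ d • e) : c ≤ d := by
  by_contra! hdc
  have hcd : 0 < c - d := sub_pos.mpr hdc
  have : (c - d) • e ≤ 0 := by rw [sub_smul]; exact sub_nonpos.mpr h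
  have := smul_le_smul_of_nonneg_left this (inv_nonneg.mpr hcd.le)
  rw [smul_smul, inv_mul_cancel₀ hcd.ne', one_smul, smul_zero] at this
  exact he.not_ge this

theorem norm_le_of_abs_le_smul [HasSolidNorm E] {u : E} (hu : 0 ≤ u) {c : ℝ} (hc : 0 ≤ c) {f : E}
    (hf : |f| ≤ c • u) : ‖f‖ ≤ c * ‖u‖ := by
  have := norm_le_norm_of_abs_le_abs (a := f) (b := c • u) (by
    rwa [abs_of_nonneg (smul_nonneg hc hu)])
  rwa [norm_smul, Real.norm_of_nonneg hc] at this

end OrderUnit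

section PositiveOperator

variable {E : Type*} [NormedAddCommGroup E] [NormedSpace ℝ E] [Lattice E] {e : E}

namespace ContinuousLinearMap

-- `c • e ≤ x` with `c > 0` puts `x` in the interior of the positive cone, so this is stronger than
-- irreducibility in the sense of invariant ideals.
def IsIrreducible (e : E) (T : E →L[ℝ] E) : Prop :=
  ∀ f, 0 < f → ∃ n, 1 ≤ n ∧ ∃ c : ℝ, 0 < c ∧ c • e ≤ (T ^ n) f

def collatzWielandtSet (S : E →L[ℝ] E) : Set ℝ :=
  {l | 0 ≤ l ∧ ∃ u : E, 0 ≤ u ∧ ‖u‖ = 1 ∧ l • u ≤ S u}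

noncomputable def collatzWielandt (S : E →L[ℝ] E) : ℝ := sSup S.collatzWielandtSet

variable {T : E →L[ℝ] E}

theorem abs_apply_le_of_abs_le (hT : Monotone T) {x y : E} (h : |x| ≤ y) : |T x| ≤ T y :=
  abs_le'.mpr ⟨hT ((le_abs_self x).trans h), map_neg T x ▸ hT ((neg_le_abs x).trans h)⟩

variable [PosSMulMono ℝ E]

theorem pow_smul_le_pow_apply (hT : Monotone T) {c : ℝ} (hc : 0 ≤ c) {f : E} (h : c • f ≤ T f)
    (m : ℕ) : c ^ m • f ≤ (T ^ m) f := by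
  induction m with
  | zero => simp
  | succ m ih =>
    calc c ^ (m + 1) • f = c • c ^ m • f := by rw [smul_smul, pow_succ']
      _ ≤ c • (T ^ m) f := smul_le_smul_of_nonneg_left ih hc
      _ = (T ^ m) (c • f) := (map_smul _ _ _).symm
      _ ≤ (T ^ m) (T f) := monotone_pow hT m h
      _ = (T ^ (m + 1)) f := by rw [pow_succ, mul_apply_eq_comp]

theorem exists_smul_le_of_apply_eq_smul (hirr : T.IsIrreducible e) {b : ℝ} (hb : 0 < b) {g : E}
    (hg : 0 < g) (hTg : T g = b • g) : ∃ α : ℝ, 0 < α ∧ α • e ≤ g := by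
  obtain ⟨n, -, c, hc, hce⟩ := hirr g hg
  refine ⟨c / b ^ n, by positivity, ?_⟩
  rw [pow_apply_of_apply_eq_smul hTg] at hce
  have := smul_le_smul_of_nonneg_left hce (inv_nonneg.mpr (pow_pos hb n).le)
  rwa [smul_smul, smul_smul, inv_mul_cancel₀ (pow_pos hb n).ne', one_smul, inv_mul_eq_div] at this

variable [IsOrderedAddMonoid E]

theorem pos_of_apply_eq_smul [Nontrivial E] (he : ∀ f : E, f ≤ ‖f‖ • e) (hT : Monotone T)
    (hirr : T.IsIrreducible e) {b : ℝ} {g : E} (hg : 0 < g) (hTg : T g = b • g) : 0 < b := by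
  by_contra! hb
  have hTg0 : T g = 0 :=
    le_antisymm (hTg ▸ smul_nonpos_of_nonpos_of_nonneg hb hg.le) (map_zero T ▸ hT hg.le)
  obtain ⟨n, hn, c, hc, hce⟩ := hirr g hg
  obtain ⟨k, rfl⟩ := Nat.exists_eq_add_of_le' hn
  rw [pow_succ, mul_apply_eq_comp, hTg0, map_zero, ← zero_smul ℝ e] at hce
  exact hc.not_ge (le_of_smul_le_smul_of_pos (pos_of_forall_le_norm_smul he) hce)

theorem exists_eigenvector_of_pow_apply_eq_smul (hT : Monotone T) {N : ℕ} (hN : N ≠ 0) {v : E}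
    (hv : 0 < v) {lam : ℝ} (hlam : 0 < lam) (hTv : (T ^ N) v = lam • v) :
    ∃ f : E, ∃ r : ℝ, 0 < r ∧ 0 < f ∧ T f = r • f := by
  set r := lam ^ ((N : ℝ)⁻¹)
  have hr : 0 < r := Real.rpow_pos_of_pos hlam _
  have hrN : r ^ N = lam := Real.rpow_inv_natCast_pow hlam.le hN
  have hterm : ∀ i ∈ range N, 0 ≤ r ^ (N - 1 - i) • (T ^ i) v := fun i _ =>
    smul_nonneg (pow_nonneg hr.le _) (map_zero (T ^ i) ▸ monotone_pow hT i hv.le)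
  have hv_le : r ^ (N - 1) • v ≤ ∑ i ∈ range N, r ^ (N - 1 - i) • (T ^ i) v := by
    simpa using single_le_sum hterm (mem_range.mpr (Nat.pos_of_ne_zero hN))
  have hrv : 0 < r ^ (N - 1) • v := lt_of_le_of_ne (smul_nonneg (pow_nonneg hr.le _) hv.le)
    (smul_ne_zero (pow_ne_zero _ hr.ne') hv.ne').symm
  exact ⟨_, r, hr, hrv.trans_le hv_le, apply_sum_pow_smul_eq T (hrN ▸ hTv)⟩

theorem le_of_apply_eq_smul_of_le_smul (hT : Monotone T) {f g : E} (hg : 0 < g) {a b C D : ℝ}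
    (ha : 0 < a) (hC : 0 ≤ C) (hTf : T f = a • f) (hTg : T g = b • g) (hgf : g ≤ C • f)
    (hfg : f ≤ D • g) : b ≤ a :=
  le_of_forall_pow_le_mul_pow ha fun k => le_of_smul_le_smul_of_pos hg <|
    calc b ^ k • g = (T ^ k) g := (pow_apply_of_apply_eq_smul hTg k).symm
      _ ≤ (T ^ k) (C • f) := monotone_pow hT k hgf
      _ = (C * a ^ k) • f := by rw [map_smul, pow_apply_of_apply_eq_smul hTf, smul_smul]
      _ ≤ (C * a ^ k) • D • g := smul_le_smul_of_nonneg_left hfg (by positivity)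
      _ = (C * D * a ^ k) • g := by rw [smul_smul, mul_right_comm]

variable [HasSolidNorm E]

theorem le_norm_apply_of_smul_le {S : E →L[ℝ] E} {l : ℝ} (hl : 0 ≤ l) {u : E} (hu : 0 ≤ u)
    (hlu : l • u ≤ S u) : l * ‖u‖ ≤ ‖S u‖ := by
  have := norm_le_norm_of_abs_le_abs (a := l • u) (b := S u) (by
    rwa [abs_of_nonneg (smul_nonneg hl hu), abs_of_nonneg ((smul_nonneg hl hu).trans hlu)])
  rwa [norm_smul, Real.norm_of_nonneg hl] at this

theorem bddAbove_collatzWielandtSet (S : E →L[ℝ] E) : BddAbove S.collatzWielandtSet := by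
  refine ⟨‖S‖, fun l ⟨hl, u, hu0, hu1, hlu⟩ => ?_⟩
  simpa [hu1] using (le_norm_apply_of_smul_le hl hu0 hlu).trans (S.le_opNorm u)

theorem le_collatzWielandt {S : E →L[ℝ] E} {l : ℝ} (hl : 0 ≤ l) {u : E} (hu : 0 < u)
    (hlu : l • u ≤ S u) : l ≤ S.collatzWielandt := by
  have hnorm : 0 < ‖u‖ := norm_pos_iff.mpr hu.ne'
  refine le_csSup S.bddAbove_collatzWielandtSet
    ⟨hl, ‖u‖⁻¹ • u, smul_nonneg (inv_nonneg.mpr hnorm.le) hu.le, ?_, ?_⟩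
  · rw [norm_smul, Real.norm_of_nonneg (inv_nonneg.mpr hnorm.le), inv_mul_cancel₀ hnorm.ne']
  · rw [map_smul, smul_comm]
    exact smul_le_smul_of_nonneg_left hlu (inv_nonneg.mpr hnorm.le)

-- A limit point of `S uⱼ`, for unit vectors `uⱼ` whose values tend to the supremum, attains it.
theorem exists_collatzWielandt_smul_le {S : E →L[ℝ] E} (hS : Monotone S)
    (hSc : IsCompactOperator S) (hpos : 0 < S.collatzWielandt) :
    ∃ v : E, 0 < v ∧ S.collatzWielandt • v ≤ S v := by
  set lam := S.collatzWielandt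
  have hne : S.collatzWielandtSet.Nonempty := by
    by_contra h
    rw [Set.not_nonempty_iff_eq_empty] at h
    simp [lam, collatzWielandt, h] at hpos
  obtain ⟨l, -, hl_tendsto, hl_mem⟩ := exists_seq_tendsto_sSup hne S.bddAbove_collatzWielandtSet
  choose hl0 u hu0 hu1 hlu using hl_mem
  obtain ⟨v, -, φ, hφ, hSu_tendsto⟩ := (hSc.isCompact_closure_image_closedBall 1).tendsto_subseq
    fun j => subset_closure ⟨u j, by simp [hu1 j], rfl⟩
  have hl_φ := hl_tendsto.comp hφ.tendsto_atTop
  have hv0 : 0 ≤ v := ge_of_tendsto' hSu_tendsto fun j => map_zero S ▸ hS (hu0 (φ j))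
  have hv : lam ≤ ‖v‖ := le_of_tendsto_of_tendsto' hl_φ hSu_tendsto.norm fun j => by
    simpa [hu1] using le_norm_apply_of_smul_le (hl0 (φ j)) (hu0 (φ j)) (hlu (φ j))
  refine ⟨v, hv0.lt_of_ne ?_, ?_⟩
  · rintro rfl
    simp only [norm_zero] at hv
    exact hpos.not_ge hv
  · refine le_of_tendsto_of_tendsto' (hl_φ.smul hSu_tendsto)
      ((S.continuous.tendsto v).comp hSu_tendsto) fun j => ?_
    have := hS (hlu (φ j))
    rw [map_smul] at this
    exact this

-- If `S v - λ v` were positive and nonzero, some `Tᵖ` would push it above `δ e`, and then `Tᵖ v`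
-- would satisfy `(λ + δ / ‖Tᵖ v‖) Tᵖ v ≤ S (Tᵖ v)`, beating the supremum `λ`.
theorem apply_eq_collatzWielandt_smul [Nontrivial E] (he : ∀ f : E, f ≤ ‖f‖ • e)
    (hT : Monotone T) (hirr : T.IsIrreducible e) {S : E →L[ℝ] E} (hST : Commute S T) {v : E}
    (hv0 : 0 ≤ v) (hv : S.collatzWielandt • v ≤ S v) : S v = S.collatzWielandt • v := by
  set lam := S.collatzWielandt
  by_contra hne
  obtain ⟨p, -, δ, hδ, hδd⟩ :=
    hirr (S v - lam • v) ((sub_nonneg.mpr hv).lt_of_ne (sub_ne_zero.mpr hne).symm)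
  have hSw : S ((T ^ p) v) = lam • (T ^ p) v + (T ^ p) (S v - lam • v) := by
    rw [map_sub, map_smul, add_sub_cancel, ← mul_apply_eq_comp, ← mul_apply_eq_comp,
      (hST.pow_right p).eq]
  set w := (T ^ p) v
  have hw : w ≠ 0 := by
    intro hw0
    rw [hw0, map_zero, smul_zero, zero_add] at hSw
    rw [← hSw, ← zero_smul ℝ e] at hδd
    exact hδ.not_ge (le_of_smul_le_smul_of_pos (pos_of_forall_le_norm_smul he) hδd)
  have hnorm : 0 < ‖w‖ := norm_pos_iff.mpr hw
  have hgain : (lam + δ / ‖w‖) • w ≤ S w := by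
    rw [add_smul, hSw]
    exact add_le_add_right ((div_norm_smul_le he hδ.le hw).trans hδd) _
  have hlam : 0 ≤ lam := Real.sSup_nonneg fun l hl => hl.1
  have := le_collatzWielandt (by positivity)
    ((map_zero (T ^ p) ▸ monotone_pow hT p hv0).lt_of_ne hw.symm) hgain
  linarith [div_pos hδ hnorm]

theorem exists_eigenvector [Nontrivial E] (he : ∀ f : E, f ≤ ‖f‖ • e) (hT : Monotone T)
    (hirr : T.IsIrreducible e) (hcpt : ∃ m : ℕ, 1 ≤ m ∧ IsCompactOperator (T ^ m)) :
    ∃ f : E, ∃ r : ℝ, 0 < r ∧ 0 < f ∧ T f = r • f := by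
  obtain ⟨m, hm, hTm⟩ := hcpt
  have he0 := pos_of_forall_le_norm_smul he
  obtain ⟨n, hn, c, hc, hce⟩ := hirr e he0
  have hSc : IsCompactOperator (T ^ (n * m)) := by
    obtain ⟨k, rfl⟩ := Nat.exists_eq_add_of_le' hn
    rw [add_one_mul, pow_add, FunLike.coe_mul_eq_comp]
    exact hTm.clm_comp _
  have hSe : c ^ m • e ≤ (T ^ (n * m)) e :=
    pow_mul T n m ▸ pow_smul_le_pow_apply (monotone_pow hT n) hc.le hce m
  have hcw : 0 < (T ^ (n * m)).collatzWielandt :=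
    (pow_pos hc m).trans_le (le_collatzWielandt (pow_pos hc m).le he0 hSe)
  obtain ⟨v, hv, hSv⟩ := exists_collatzWielandt_smul_le (monotone_pow hT _) hSc hcw
  exact exists_eigenvector_of_pow_apply_eq_smul hT (by positivity) hv hcw
    (apply_eq_collatzWielandt_smul he hT hirr ((Commute.refl T).pow_left _) hv.le hSv)

theorem norm_pow_le_of_apply_eq_smul (he : ∀ f : E, f ≤ ‖f‖ • e) (hT : Monotone T) {f : E}
    (hf : 0 ≤ f) {α : ℝ} (hα : 0 < α) (hαf : α • e ≤ f) {r : ℝ} (hr : 0 ≤ r)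
    (hTf : T f = r • f) (k : ℕ) : ‖T ^ k‖ ≤ ‖f‖ / α * r ^ k := by
  refine opNorm_le_bound _ (by positivity) fun x => ?_
  have hx : |x| ≤ (‖x‖ / α) • f := by
    simpa [norm_abs_eq_norm] using le_smul_of_smul_le he hα hαf |x|
  have hTx := abs_apply_le_of_abs_le (monotone_pow hT k) hx
  rw [map_smul, pow_apply_of_apply_eq_smul hTf, smul_smul] at hTx
  calc ‖(T ^ k) x‖ ≤ ‖x‖ / α * r ^ k * ‖f‖ := norm_le_of_abs_le_smul hf (by positivity) hTx
    _ = ‖f‖ / α * r ^ k * ‖x‖ := by ring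

theorem spectralRadius_eq_of_apply_eq_smul [CompleteSpace E] (he : ∀ f : E, f ≤ ‖f‖ • e)
    (hT : Monotone T) {f : E} (hf : 0 < f) {α : ℝ} (hα : 0 < α) (hαf : α • e ≤ f) {r : ℝ}
    (hr : 0 < r) (hTf : T f = r • f) : spectralRadius ℝ T = ENNReal.ofReal r := by
  have : Nontrivial E := ⟨f, 0, hf.ne'⟩
  refine le_antisymm (spectralRadius_le_of_norm_pow_le hr
    (norm_pow_le_of_apply_eq_smul he hT hf.le hα hαf hr.le hTf)) ?_
  have hmem : r ∈ spectrum ℝ T := by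
    rw [spectrum_eq]
    exact Module.End.HasEigenvalue.mem_spectrum
      (Module.End.hasEigenvalue_of_hasEigenvector ⟨Module.End.mem_eigenspace_iff.mpr hTf, hf.ne'⟩)
  rw [← Real.enorm_of_nonneg hr.le]
  exact le_iSup₂ (f := fun k (_ : k ∈ spectrum ℝ T) => (‖k‖₊ : ℝ≥0∞)) r hmem

-- The largest `c` with `c f ≤ g` leaves the eigenvector `g - c f ≥ 0`; were it nonzero, it would
-- lie above a multiple of `e`, hence of `f`, contradicting maximality of `c`.
theorem exists_pos_eq_smul_of_apply_eq_same_smul [Nontrivial E] (he : ∀ f : E, f ≤ ‖f‖ • e)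
    (hirr : T.IsIrreducible e) {r : ℝ} (hr : 0 < r) {f : E} {α : ℝ} (hα : 0 < α)
    (hαf : α • e ≤ f) (hTf : T f = r • f) {g : E} (hg : 0 < g) (hTg : T g = r • g) :
    ∃ c : ℝ, 0 < c ∧ g = c • f := by
  have hf := pos_of_smul_le (pos_of_forall_le_norm_smul he) hα hαf
  set Γ := {t : ℝ | 0 ≤ t ∧ t • f ≤ g}
  have hΓ : IsClosed Γ :=
    isClosed_Ici.inter (isClosed_le (continuous_id.smul continuous_const) continuous_const)
  have hΓbdd : BddAbove Γ := ⟨‖g‖ / α, fun t ht =>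
    le_of_smul_le_smul_of_pos hf (ht.2.trans (le_smul_of_smul_le he hα hαf g))⟩
  obtain ⟨hc0, hcg⟩ := hΓ.csSup_mem ⟨0, le_rfl, by simpa using hg.le⟩ hΓbdd
  set c := sSup Γ
  have hrest : g - c • f = 0 := by
    by_contra hne
    obtain ⟨β, hβ, hβe⟩ := exists_smul_le_of_apply_eq_smul hirr hr
      ((sub_nonneg.mpr hcg).lt_of_ne (Ne.symm hne)) (by
        rw [map_sub, map_smul, hTf, hTg, smul_sub, smul_comm c r])
    have hmem : c + β / ‖f‖ ∈ Γ := ⟨by positivity, by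
      rw [add_smul]
      simpa using add_le_add_right ((div_norm_smul_le he hβ.le hf.ne').trans hβe) (c • f)⟩
    linarith [le_csSup hΓbdd hmem, div_pos hβ (norm_pos_iff.mpr hf.ne')]
  refine ⟨c, hc0.lt_of_ne fun h => hg.ne' ?_, sub_eq_zero.mp hrest⟩
  rwa [sub_eq_zero, ← h, zero_smul] at hrest

theorem exists_pos_eq_smul_of_apply_eq_smul [Nontrivial E] (he : ∀ f : E, f ≤ ‖f‖ • e)
    (hT : Monotone T) (hirr : T.IsIrreducible e) {r : ℝ} (hr : 0 < r) {f : E} {α : ℝ}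
    (hα : 0 < α) (hαf : α • e ≤ f) (hTf : T f = r • f) {g : E} (hg : 0 < g) {b : ℝ}
    (hTg : T g = b • g) : ∃ c : ℝ, 0 < c ∧ g = c • f := by
  have hb := pos_of_apply_eq_smul he hT hirr hg hTg
  obtain ⟨β, hβ, hβg⟩ := exists_smul_le_of_apply_eq_smul hirr hb hg hTg
  have hf := pos_of_smul_le (pos_of_forall_le_norm_smul he) hα hαf
  have hgf := le_smul_of_smul_le he hα hαf g
  have hfg := le_smul_of_smul_le he hβ hβg f
  obtain rfl : b = r := le_antisymm
    (le_of_apply_eq_smul_of_le_smul hT hg hr (by positivity) hTf hTg hgf hfg)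
    (le_of_apply_eq_smul_of_le_smul hT hf hb (by positivity) hTg hTf hfg hgf)
  exact exists_pos_eq_smul_of_apply_eq_same_smul he hirr hr hα hαf hTf hg hTg

end ContinuousLinearMap

end PositiveOperator

namespace MeasureTheory.Lp

variable {X : Type*} [MeasurableSpace X] {μ : Measure X}

instance instPosSMulMono {p : ℝ≥0∞} : PosSMulMono ℝ (Lp ℝ p μ) :=
  PosSMulMono.of_smul_nonneg fun c hc f hf => by
    rw [← coeFn_nonneg] at hf ⊢
    filter_upwards [hf, coeFn_smul c f] with x hx hcx
    rw [hcx]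
    exact smul_nonneg hc hx

noncomputable def constOne (μ : Measure X) : Lp ℝ ∞ μ := (memLp_top_const (1 : ℝ)).toLp _

theorem coeFn_constOne : constOne μ =ᵐ[μ] fun _ => (1 : ℝ) := MemLp.coeFn_toLp _

theorem smul_constOne_le_iff {c : ℝ} {f : Lp ℝ ∞ μ} :
    c • constOne μ ≤ f ↔ ∀ᵐ x ∂μ, c ≤ f x := by
  rw [← coeFn_le]
  refine eventually_congr ?_
  filter_upwards [coeFn_smul c (constOne μ), coeFn_constOne (μ := μ)] with x h1 h2
  simp [h1, h2]

theorem le_smul_constOne_iff {c : ℝ} {f : Lp ℝ ∞ μ} :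
    f ≤ c • constOne μ ↔ ∀ᵐ x ∂μ, f x ≤ c := by
  rw [← coeFn_le]
  refine eventually_congr ?_
  filter_upwards [coeFn_smul c (constOne μ), coeFn_constOne (μ := μ)] with x h1 h2
  simp [h1, h2]

theorem ae_abs_le_norm (f : Lp ℝ ∞ μ) : ∀ᵐ x ∂μ, |f x| ≤ ‖f‖ := by
  have hfin : eLpNormEssSup f μ ≠ ∞ := by simpa using eLpNorm_ne_top f
  filter_upwards [ae_le_eLpNormEssSup (f := f)] with x hx
  simpa [norm_def, Real.norm_eq_abs] using ENNReal.toReal_mono hfin hx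

theorem le_norm_smul_constOne (f : Lp ℝ ∞ μ) : f ≤ ‖f‖ • constOne μ := by
  rw [le_smul_constOne_iff]
  filter_upwards [ae_abs_le_norm f] with x hx
  exact (le_abs_self _).trans hx

theorem nontrivial_of_ne_zero (hμ : μ ≠ 0) : Nontrivial (Lp ℝ ∞ μ) := by
  refine ⟨constOne μ, 0, fun h => ?_⟩
  have : (ae μ).NeBot := ae_neBot.mpr hμ
  have h1 : (1 : ℝ) • constOne μ ≤ 0 := by rw [one_smul, h]
  obtain ⟨x, h1x, h0x⟩ := (smul_constOne_le_iff.mp h1 |>.and (coeFn_zero ℝ ∞ μ)).exists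
  rw [h0x, Pi.zero_apply] at h1x
  exact one_pos.not_ge h1x

theorem essInf_pos_iff (hμ : μ ≠ 0) (f : Lp ℝ ∞ μ) :
    0 < essInf f μ ↔ ∃ c : ℝ, 0 < c ∧ c • constOne μ ≤ f := by
  have : (ae μ).NeBot := ae_neBot.mpr hμ
  have hbdd := ae_abs_le_norm f
  simp_rw [smul_constOne_le_iff]
  constructor
  · intro h
    refine ⟨essInf f μ / 2, half_pos h, (ae_lt_of_lt_essInf (half_lt_self h) ?_).mono
      fun x hx => hx.le⟩
    exact isBoundedUnder_of_eventually_ge (hbdd.mono fun x hx => neg_le_of_abs_le hx)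
  · rintro ⟨c, hc, hcf⟩
    exact hc.trans_le (le_essInf_of_ae_le c hcf
      (isCoboundedUnder_ge_of_eventually_le _ (hbdd.mono fun x hx => le_of_abs_le hx)))

theorem measure_ne_zero_of_spectralRadius_pos {T : Lp ℝ ∞ μ →L[ℝ] Lp ℝ ∞ μ}
    (hr : 0 < spectralRadius ℝ T) : μ ≠ 0 := by
  rintro rfl
  have : Subsingleton (Lp ℝ ∞ (0 : Measure X)) := ⟨fun f g => Lp.ext_iff.2 rfl⟩
  simp [spectralRadius, spectrum.of_subsingleton] at hr

end MeasureTheory.Lp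

theorem stmt4_general {X : Type*} [MeasurableSpace X] {μ : Measure X}
    (T : Lp ℝ ∞ μ →L[ℝ] Lp ℝ ∞ μ)
    (hpos : ∀ f : Lp ℝ ∞ μ, 0 ≤ᵐ[μ] ⇑f → 0 ≤ᵐ[μ] ⇑(T f))
    (hesp : ∀ f : Lp ℝ ∞ μ, 0 ≤ᵐ[μ] ⇑f → f ≠ 0 →
      ∃ n : ℕ, 1 ≤ n ∧ 0 < essInf (fun x => ((T ^ n) f : Lp ℝ ∞ μ) x) μ)
    (hcpt : ∃ n : ℕ, 1 ≤ n ∧ IsCompactOperator ⇑(T ^ n))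
    (hr : 0 < spectralRadius ℝ T) :
    ∃ fbar : Lp ℝ ∞ μ, 0 < essInf (fun x => fbar x) μ ∧
      T fbar = (spectralRadius ℝ T).toReal • fbar ∧
      ∀ g : Lp ℝ ∞ μ, 0 ≤ᵐ[μ] ⇑g → g ≠ 0 → (∃ b : ℝ, T g = b • g) →
        ∃ c : ℝ, 0 < c ∧ g = c • fbar := by
  have hμ := Lp.measure_ne_zero_of_spectralRadius_pos hr
  have := Lp.nontrivial_of_ne_zero hμ
  have he := Lp.le_norm_smul_constOne (μ := μ)
  have hT : Monotone T := (monotone_iff_map_nonneg T).mpr fun f hf =>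
    (Lp.coeFn_nonneg _).mp (hpos f ((Lp.coeFn_nonneg f).mpr hf))
  have hirr : T.IsIrreducible (Lp.constOne μ) := fun f hf => by
    obtain ⟨n, hn, hess⟩ := hesp f ((Lp.coeFn_nonneg f).mpr hf.le) hf.ne'
    exact ⟨n, hn, (Lp.essInf_pos_iff hμ _).mp hess⟩
  obtain ⟨f, r, hr0, hf, hTf⟩ := T.exists_eigenvector he hT hirr hcpt
  obtain ⟨α, hα, hαf⟩ := T.exists_smul_le_of_apply_eq_smul hirr hr0 hf hTf
  have hrad := T.spectralRadius_eq_of_apply_eq_smul he hT hf hα hαf hr0 hTf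
  refine ⟨f, (Lp.essInf_pos_iff hμ f).mpr ⟨α, hα, hαf⟩,
    by rw [hrad, ENNReal.toReal_ofReal hr0.le, hTf], ?_⟩
  rintro g hg0 hg ⟨b, hTg⟩
  exact T.exists_pos_eq_smul_of_apply_eq_smul he hT hirr hr0 hα hαf hTf
    (((Lp.coeFn_nonneg g).mp hg0).lt_of_ne' hg) hTg

/-- Perron–Frobenius on `L^∞`: existence of an eigenfunction with positive
essential infimum for the spectral radius, unique up to positive scalar multiples among a.e.
non-negative eigenfunctions. -/
theorem stmt4 {X : Type*} [MeasurableSpace X] {μ : Measure X} [SigmaFinite μ]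
    (T : Lp ℝ ∞ μ →L[ℝ] Lp ℝ ∞ μ)
    (hpos : ∀ f : Lp ℝ ∞ μ, 0 ≤ᵐ[μ] ⇑f → 0 ≤ᵐ[μ] ⇑(T f))
    (hesp : ∀ f : Lp ℝ ∞ μ, 0 ≤ᵐ[μ] ⇑f → f ≠ 0 →
      ∃ n : ℕ, 1 ≤ n ∧ 0 < essInf (fun x => ((T ^ n) f : Lp ℝ ∞ μ) x) μ)
    (hcpt : ∃ n : ℕ, 1 ≤ n ∧ IsCompactOperator ⇑(T ^ n))
    (hr : 0 < spectralRadius ℝ T) :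
    ∃ fbar : Lp ℝ ∞ μ, 0 < essInf (fun x => fbar x) μ ∧
      T fbar = (spectralRadius ℝ T).toReal • fbar ∧
      ∀ g : Lp ℝ ∞ μ, 0 ≤ᵐ[μ] ⇑g → g ≠ 0 → (∃ b : ℝ, T g = b • g) →
        ∃ c : ℝ, 0 < c ∧ g = c • fbar :=
  stmt4_general T hpos hesp hcpt hr
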